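/- arXiv:2512.01355 — 5 statements merged into one kernel-verified Lean document; each statement's English description precedes it below -/
import Mathlib

section
/- Let F : ℂⁿ → ℂⁿ be continuously differentiable, let x ∈ ℂⁿ, r > 0, 0 < ρ < 1, and let Y : ℂⁿ → ℂⁿ be an invertible continuous linear map. Assume the pointwise Krawczyk condition holds for (F, x, r, Y, ρ). Then there exists a unique point x* in the closed ball of radius r centered at x with F(x*) = 0, and moreover ‖x − x*‖ ≤ r·ρ. -/
/-- The pointwise Krawczyk condition for `(F, x, r, Y, ρ)`:
for every `z` in the closed ball of radius `r` around `x` and every `v` with `‖v‖ ≤ r`,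
`‖-Y (F x) + v - Y (DF(z) v)‖ ≤ r * ρ`. -/
def KrawczykCond {n : ℕ} (F : (Fin n → ℂ) → (Fin n → ℂ)) (x : Fin n → ℂ) (r : ℝ)
    (Y : (Fin n → ℂ) →L[ℂ] (Fin n → ℂ)) (ρ : ℝ) : Prop :=
  ∀ z ∈ Metric.closedBall x r, ∀ v : Fin n → ℂ, ‖v‖ ≤ r →
    ‖-Y (F x) + v - Y (fderiv ℂ F z v)‖ ≤ r * ρ

/-!
The zeros of `F` are the fixed points of `T y = y - Y (F y)`, whose derivative at `z` is
`id - Y ∘ DF z`. Subtracting the Krawczyk condition at `-v` from the one at `v` removes the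
constant `-Y (F x)` and bounds `‖id - Y ∘ DF z‖` by `ρ` on the ball, so `T` is a `ρ`-contraction
there. With `v = y - x`, the condition itself bounds the derivative of
`t ↦ -t • Y (F x) + T (x + t • (y - x))`, whose increment over `[0, 1]` is `T y - x`; hence `T`
maps the ball of radius `r` into the ball of radius `r * ρ`, and Banach's fixed point theorem
concludes.
-/

open Metric Set Function

theorem norm_add_image_sub_le_of_norm_add_hasFDerivAt_le {E F : Type*}
    [NormedAddCommGroup E] [NormedSpace ℝ E] [NormedAddCommGroup F] [NormedSpace ℝ F]
    {f : E → F} {f' : E → E →L[ℝ] F} {x y : E} {c : F} {C : ℝ}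
    (hf : ∀ z ∈ segment ℝ x y, HasFDerivAt f (f' z) z)
    (bound : ∀ z ∈ segment ℝ x y, ‖c + f' z (y - x)‖ ≤ C) :
    ‖c + (f y - f x)‖ ≤ C := by
  set γ : ℝ → E := fun t => x + t • (y - x)
  have hγ : ∀ t ∈ Icc (0 : ℝ) 1, γ t ∈ segment ℝ x y := fun t ht =>
    segment_eq_image' ℝ x y ▸ mem_image_of_mem γ ht
  have hderiv : ∀ t ∈ Icc (0 : ℝ) 1, HasDerivWithinAt (fun t => t • c + f (γ t))
      (c + f' (γ t) (y - x)) (Icc 0 1) t := by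
    intro t ht
    have hγ' : HasDerivAt γ (y - x) t := by
      simpa only [one_smul] using ((hasDerivAt_id' t).smul_const (y - x)).const_add x
    have h := ((hasDerivAt_id' t).smul_const c).add ((hf _ (hγ t ht)).comp_hasDerivAt t hγ')
    rw [one_smul] at h
    exact h.hasDerivWithinAt
  rw [← add_sub_assoc]
  simpa [γ] using norm_image_sub_le_of_norm_deriv_le_segment_01' hderiv
    fun t ht => bound _ (hγ t (Ico_subset_Icc_self ht))

section RCLike

variable {𝕜 E F : Type*} [RCLike 𝕜] [NormedAddCommGroup E] [NormedSpace 𝕜 E]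
  [NormedAddCommGroup F] [NormedSpace 𝕜 F] {L : E →L[𝕜] F} {r s : ℝ}

theorem ContinuousLinearMap.norm_apply_le_of_norm_add_apply_le (c : F)
    (h : ∀ v, ‖v‖ ≤ r → ‖c + L v‖ ≤ s) {v : E} (hv : ‖v‖ ≤ r) : ‖L v‖ ≤ s := by
  have h₂ : ‖(2 : 𝕜) • L v‖ ≤ s + s := by
    have : (2 : 𝕜) • L v = (c + L v) - (c + L (-v)) := by rw [map_neg]; module
    exact this ▸ norm_sub_le_of_le (h v hv) (h (-v) (by rwa [norm_neg]))
  rw [norm_smul, RCLike.norm_ofNat] at h₂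
  linarith

theorem ContinuousLinearMap.opNorm_le_of_norm_apply_le (hr : 0 < r)
    (h : ∀ v, ‖v‖ ≤ r → ‖L v‖ ≤ s) : ‖L‖ ≤ s / r := by
  have hs : 0 ≤ s := (norm_nonneg _).trans (h 0 (by simpa using hr.le))
  refine L.opNorm_le_bound (by positivity) fun v => ?_
  rcases eq_or_ne v 0 with rfl | hv
  · simp
  have hvpos : 0 < ‖v‖ := norm_pos_iff.2 hv
  have hscaled := h _ (norm_smul_inv_norm' (𝕜 := 𝕜) hr.le hv).le
  rw [map_smul, norm_smul, norm_mul, norm_inv, RCLike.norm_ofReal, RCLike.norm_coe_norm,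
    abs_of_pos hr] at hscaled
  rw [div_mul_eq_mul_div, le_div_iff₀ hr]
  calc ‖L v‖ * r = ‖v‖ * (r * ‖v‖⁻¹ * ‖L v‖) := by field_simp
    _ ≤ s * ‖v‖ := by rw [mul_comm s]; exact mul_le_mul_of_nonneg_left hscaled hvpos.le

end RCLike

theorem exists_unique_isFixedPt_of_mapsTo_of_lipschitzOnWith {α : Type*} [MetricSpace α]
    {T : α → α} {s t : Set α} {K : NNReal} (hs : IsComplete s) (hne : s.Nonempty) (hts : t ⊆ s)
    (hmaps : MapsTo T s t) (hT : LipschitzOnWith K T s) (hK : K < 1) :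
    ∃ y ∈ t, IsFixedPt T y ∧ ∀ z ∈ s, IsFixedPt T z → z = y := by
  obtain ⟨x, hx⟩ := hne
  have hcontr : ContractingWith K ((hmaps.mono_right hts).restrict T s s) :=
    ⟨hK, fun a b => hT.edist_le_mul_of_le a.2 b.2 le_rfl⟩
  obtain ⟨y, hys, hy, -⟩ :=
    ContractingWith.exists_fixedPoint' hs (hmaps.mono_right hts) hcontr hx (edist_ne_top _ _)
  refine ⟨y, hy ▸ hmaps hys, hy, fun z hz hzfix => ?_⟩
  exact congrArg Subtype.val (hcontr.fixedPoint_unique' (x := ⟨z, hz⟩) (y := ⟨y, hys⟩)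
    (Subtype.ext hzfix) (Subtype.ext hy))

section Krawczyk

variable {E : Type*} [NormedAddCommGroup E] [NormedSpace ℂ E] {F : E → E} {Y : E →L[ℂ] E}
  {x : E} {r ρ : ℝ}

def krawczykMap (F : E → E) (Y : E →L[ℂ] E) (y : E) : E := y - Y (F y)

theorem hasFDerivAt_krawczykMap {F' : E →L[ℂ] E} {z : E} (hF : HasFDerivAt F F' z) :
    HasFDerivAt (krawczykMap F Y) (.id ℂ E - Y ∘L F') z :=
  (hasFDerivAt_id z).sub (Y.hasFDerivAt.comp z hF)

theorem isFixedPt_krawczykMap_iff (hY : Injective Y) {y : E} :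
    IsFixedPt (krawczykMap F Y) y ↔ F y = 0 := by
  rw [IsFixedPt, krawczykMap, sub_eq_self, map_eq_zero_iff Y hY]

theorem norm_krawczykMap_sub_le (hF : ∀ z ∈ closedBall x r, DifferentiableAt ℂ F z)
    (hK : ∀ z ∈ closedBall x r, ∀ v : E, ‖v‖ ≤ r →
      ‖-Y (F x) + v - Y (fderiv ℂ F z v)‖ ≤ r * ρ)
    {y : E} (hy : y ∈ closedBall x r) :
    ‖krawczykMap F Y y - x‖ ≤ r * ρ := by
  have hseg : segment ℝ x y ⊆ closedBall x r :=
    (convex_closedBall x r).segment_subset (mem_closedBall_self (nonempty_closedBall.1 ⟨y, hy⟩)) hy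
  calc ‖krawczykMap F Y y - x‖
      = ‖-Y (F x) + (krawczykMap F Y y - krawczykMap F Y x)‖ := by
        simp only [krawczykMap]; congr 1; abel
    _ ≤ r * ρ := norm_add_image_sub_le_of_norm_add_hasFDerivAt_le
        (f' := fun z => (ContinuousLinearMap.id ℂ E - Y ∘L fderiv ℂ F z).restrictScalars ℝ)
        (fun z hz => (hasFDerivAt_krawczykMap (hF z (hseg hz)).hasFDerivAt).restrictScalars ℝ)
        fun z hz => by
          simpa [add_sub_assoc] using hK z (hseg hz) (y - x) (mem_closedBall_iff_norm.1 hy)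

theorem opNorm_fderiv_krawczykMap_le (hr : 0 < r)
    (hK : ∀ z ∈ closedBall x r, ∀ v : E, ‖v‖ ≤ r →
      ‖-Y (F x) + v - Y (fderiv ℂ F z v)‖ ≤ r * ρ)
    {z : E} (hz : z ∈ closedBall x r) :
    ‖ContinuousLinearMap.id ℂ E - Y ∘L fderiv ℂ F z‖ ≤ ρ := by
  have h := ContinuousLinearMap.opNorm_le_of_norm_apply_le
    (L := ContinuousLinearMap.id ℂ E - Y ∘L fderiv ℂ F z) hr fun v hv =>
    ContinuousLinearMap.norm_apply_le_of_norm_add_apply_le (-Y (F x))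
      (fun w hw => by simpa [add_sub_assoc] using hK z hz w hw) hv
  rwa [mul_div_cancel_left₀ _ hr.ne'] at h

theorem lipschitzOnWith_krawczykMap (hr : 0 < r)
    (hF : ∀ z ∈ closedBall x r, DifferentiableAt ℂ F z)
    (hK : ∀ z ∈ closedBall x r, ∀ v : E, ‖v‖ ≤ r →
      ‖-Y (F x) + v - Y (fderiv ℂ F z v)‖ ≤ r * ρ) :
    LipschitzOnWith ρ.toNNReal (krawczykMap F Y) (closedBall x r) :=
  LipschitzOnWith.of_dist_le' fun y hy z hz => by
    simpa only [dist_eq_norm] using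
      (convex_closedBall x r).norm_image_sub_le_of_norm_hasFDerivWithin_le
        (fun w hw => (hasFDerivAt_krawczykMap (hF w hw).hasFDerivAt).hasFDerivWithinAt)
        (fun w hw => opNorm_fderiv_krawczykMap_le hr hK hw) hz hy

end Krawczyk

theorem krawczyk_unique_zero_general {n : ℕ} (F : (Fin n → ℂ) → (Fin n → ℂ))
    (hF : ContDiff ℂ 1 F) (x : Fin n → ℂ) (r ρ : ℝ) (hr : 0 < r)
    (hρ1 : ρ < 1) (Y : (Fin n → ℂ) ≃L[ℂ] (Fin n → ℂ))
    (hK : KrawczykCond F x r (Y : (Fin n → ℂ) →L[ℂ] (Fin n → ℂ)) ρ) :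
    ∃ xs ∈ Metric.closedBall x r, F xs = 0 ∧ ‖x - xs‖ ≤ r * ρ ∧
      ∀ y ∈ Metric.closedBall x r, F y = 0 → y = xs := by
  have hFd : ∀ z ∈ closedBall x r, DifferentiableAt ℂ F z := fun z _ =>
    (hF.differentiable one_ne_zero) z
  have hball : closedBall x (r * ρ) ⊆ closedBall x r :=
    closedBall_subset_closedBall (mul_le_of_le_one_right hr.le hρ1.le)
  obtain ⟨xs, hxs, hfix, hunique⟩ := exists_unique_isFixedPt_of_mapsTo_of_lipschitzOnWith
    isClosed_closedBall.isComplete (nonempty_closedBall.2 hr.le) hball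
    (fun y hy => mem_closedBall_iff_norm.2 (norm_krawczykMap_sub_le hFd hK hy))
    (lipschitzOnWith_krawczykMap hr hFd hK) (Real.toNNReal_lt_one.2 hρ1)
  have hzero (y : Fin n → ℂ) : IsFixedPt (krawczykMap F Y) y ↔ F y = 0 :=
    isFixedPt_krawczykMap_iff Y.injective
  refine ⟨xs, hball hxs, (hzero xs).1 hfix, ?_, fun y hy hFy => hunique y hy ((hzero y).2 hFy)⟩
  rw [norm_sub_rev]
  exact mem_closedBall_iff_norm.1 hxs

/-- Krawczyk certification theorem: the pointwise Krawczyk condition with `0 < ρ < 1`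
yields a unique zero `x⋆` of `F` in the closed ball of radius `r` around `x`, with
`‖x - x⋆‖ ≤ r * ρ`. -/
theorem krawczyk_unique_zero {n : ℕ} (F : (Fin n → ℂ) → (Fin n → ℂ))
    (hF : ContDiff ℂ 1 F) (x : Fin n → ℂ) (r ρ : ℝ) (hr : 0 < r)
    (hρ0 : 0 < ρ) (hρ1 : ρ < 1) (Y : (Fin n → ℂ) ≃L[ℂ] (Fin n → ℂ))
    (hK : KrawczykCond F x r (Y : (Fin n → ℂ) →L[ℂ] (Fin n → ℂ)) ρ) :
    ∃ xs ∈ Metric.closedBall x r, F xs = 0 ∧ ‖x - xs‖ ≤ r * ρ ∧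
      ∀ y ∈ Metric.closedBall x r, F y = 0 → y = xs :=
  krawczyk_unique_zero_general F hF x r ρ hr hρ1 Y hK
end

section
/- Let F : ℂⁿ → ℂⁿ be continuously differentiable, let x ∈ ℂⁿ, r > 0, ρ > 0, and let Y : ℂⁿ → ℂⁿ be a continuous linear map. Assume the pointwise Krawczyk condition holds for (F, x, r, Y, ρ). Then the quasi-Newton map g(y) = y − Y(F(y)) is ρ-Lipschitz on the closed ball of radius r centered at x, and g maps that closed ball into the closed ball of radius r·ρ centered at x. -/
/-!
The derivative of the quasi-Newton map `g y = y - Y (F y)` is `g' z = 1 - Y ∘ DF z`, and the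
Krawczyk condition says `‖-Y (F x) + g' z v‖ ≤ r ρ` for `z` in the ball and `‖v‖ ≤ r`.
Subtracting the instances at `v` and `-v` removes the constant term, so `‖g' z‖ ≤ ρ` on the ball
and the mean value inequality gives the Lipschitz bound. For the mapping property, the mean value
inequality applied to `t ↦ g (x + t (y - x)) - t Y (F x)` on `[0, 1]`, whose derivative is exactly
the Krawczyk expression, bounds its increment `g y - g x - Y (F x) = g y - x` by `r ρ`.
-/

open Metric Set

section

variable {𝕜 E G : Type*} [RCLike 𝕜] [NormedAddCommGroup E] [NormedSpace 𝕜 E]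
  [NormedAddCommGroup G] [NormedSpace 𝕜 G]

theorem ContinuousLinearMap.opNorm_le_of_forall_norm_le (A : E →L[𝕜] G) {r C : ℝ} (hr : 0 < r)
    (h : ∀ v, ‖v‖ ≤ r → ‖A v‖ ≤ r * C) : ‖A‖ ≤ C := by
  have hC : 0 ≤ C := nonneg_of_mul_nonneg_right (by simpa using h 0 (by simpa using hr.le)) hr
  refine A.opNorm_le_bound hC fun v => ?_
  rcases eq_or_ne v 0 with rfl | hv
  · simp
  have hvpos : 0 < ‖v‖ := norm_pos_iff.mpr hv
  have hscaled := h _ (norm_smul_inv_norm' (𝕜 := 𝕜) hr.le hv).le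
  rw [map_smul, norm_smul, norm_mul, norm_inv, RCLike.norm_coe_norm, RCLike.norm_of_nonneg hr.le,
    mul_assoc] at hscaled
  rw [mul_comm, ← inv_mul_le_iff₀ hvpos]
  exact le_of_mul_le_mul_left hscaled hr

theorem ContinuousLinearMap.opNorm_le_of_forall_norm_add_le (A : E →L[𝕜] G) (b : G) {r C : ℝ}
    (hr : 0 < r) (h : ∀ v, ‖v‖ ≤ r → ‖b + A v‖ ≤ r * C) : ‖A‖ ≤ C := by
  refine A.opNorm_le_of_forall_norm_le hr fun v hv => ?_
  have h2 : (2 : ℝ) * ‖A v‖ ≤ 2 * (r * C) := by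
    calc (2 : ℝ) * ‖A v‖ = ‖(b + A v) - (b + A (-v))‖ := by
          rw [map_neg, add_sub_add_left_eq_sub, sub_neg_eq_add, ← two_smul 𝕜, norm_smul,
            RCLike.norm_two]
      _ ≤ r * C + r * C := norm_sub_le_of_le (h v hv) (h (-v) (by rwa [norm_neg]))
      _ = 2 * (r * C) := by ring
  linarith

end

theorem Convex.norm_image_sub_add_le_of_norm_add_hasFDerivWithin_le {𝕜 E G : Type*} [RCLike 𝕜]
    [NormedAddCommGroup E] [NormedSpace ℝ E] [NormedSpace 𝕜 E] [NormedAddCommGroup G]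
    [NormedSpace 𝕜 G] {f : E → G} {f' : E → E →L[𝕜] G} {s : Set E} {x y : E} {w : G} {C : ℝ}
    (hf : ∀ z ∈ s, HasFDerivWithinAt f (f' z) s z) (bound : ∀ z ∈ s, ‖w + f' z (y - x)‖ ≤ C)
    (hs : Convex ℝ s) (xs : x ∈ s) (ys : y ∈ s) : ‖f y - f x + w‖ ≤ C := by
  let : NormedSpace ℝ G := .restrictScalars ℝ 𝕜 G
  set g := (AffineMap.lineMap x y : ℝ → E)
  have segm : MapsTo g (Icc 0 1) s := hs.mapsTo_lineMap xs ys
  have hD : ∀ t ∈ Icc (0 : ℝ) 1,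
      HasDerivWithinAt (fun t => f (g t) + t • w) (f' (g t) (y - x) + w) (Icc 0 1) t :=
    fun t ht => by
      have hfg := ((hf (g t) (segm ht)).restrictScalars ℝ).comp_hasDerivWithinAt _
        AffineMap.hasDerivWithinAt_lineMap segm
      have hw : HasDerivWithinAt (fun t : ℝ => t • w) w (Icc 0 1) t := by
        simpa using (hasDerivWithinAt_id t _).smul_const w
      exact hfg.add hw
  have hbound : ∀ t ∈ Ico (0 : ℝ) 1, ‖f' (g t) (y - x) + w‖ ≤ C := fun t ht => by
    rw [add_comm]
    exact bound _ (segm (Ico_subset_Icc_self ht))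
  simpa [g, add_sub_right_comm] using norm_image_sub_le_of_norm_deriv_le_segment_01' hD hbound

theorem krawczyk_quasiNewton_lipschitz_and_maps_general {n : ℕ}
    (F : (Fin n → ℂ) → (Fin n → ℂ)) (hF : ContDiff ℂ 1 F)
    (x : Fin n → ℂ) (r ρ : ℝ) (hr : 0 < r)
    (Y : (Fin n → ℂ) →L[ℂ] (Fin n → ℂ))
    (hK : KrawczykCond F x r Y ρ) :
    (∀ y₁ ∈ Metric.closedBall x r, ∀ y₂ ∈ Metric.closedBall x r,
      ‖(y₁ - Y (F y₁)) - (y₂ - Y (F y₂))‖ ≤ ρ * ‖y₁ - y₂‖) ∧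
    (∀ y ∈ Metric.closedBall x r, (y - Y (F y)) ∈ Metric.closedBall x (r * ρ)) := by
  let g' : (Fin n → ℂ) → (Fin n → ℂ) →L[ℂ] (Fin n → ℂ) :=
    fun z => ContinuousLinearMap.id ℂ _ - Y.comp (fderiv ℂ F z)
  have hg : ∀ z ∈ closedBall x r,
      HasFDerivWithinAt (fun y => y - Y (F y)) (g' z) (closedBall x r) z :=
    fun z _ => ((hasFDerivAt_id z).sub
      (Y.hasFDerivAt.comp z ((hF.differentiable one_ne_zero) z).hasFDerivAt)).hasFDerivWithinAt
  have hK' : ∀ z ∈ closedBall x r, ∀ v, ‖v‖ ≤ r → ‖-Y (F x) + g' z v‖ ≤ r * ρ :=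
    fun z hz v hv => by
      change ‖-Y (F x) + (v - Y (fderiv ℂ F z v))‖ ≤ r * ρ
      rw [← add_sub_assoc]
      exact hK z hz v hv
  refine ⟨fun y₁ h₁ y₂ h₂ => ?_, fun y hy => ?_⟩
  · exact (convex_closedBall x r).norm_image_sub_le_of_norm_hasFDerivWithin_le hg
      (fun z hz => (g' z).opNorm_le_of_forall_norm_add_le _ hr (hK' z hz)) h₂ h₁
  · have hmv := (convex_closedBall x r).norm_image_sub_add_le_of_norm_add_hasFDerivWithin_le hg
      (fun z hz => hK' z hz (y - x) (mem_closedBall_iff_norm.mp hy)) (mem_closedBall_self hr.le) hy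
    rwa [mem_closedBall_iff_norm, show y - Y (F y) - x = y - Y (F y) - (x - Y (F x)) + -Y (F x)
      by abel]

/-- Under the pointwise Krawczyk condition, the quasi-Newton map `g y = y - Y (F y)`
is `ρ`-Lipschitz on the closed ball of radius `r` around `x` and maps that ball
into the closed ball of radius `r * ρ` around `x`. -/
theorem krawczyk_quasiNewton_lipschitz_and_maps {n : ℕ}
    (F : (Fin n → ℂ) → (Fin n → ℂ)) (hF : ContDiff ℂ 1 F)
    (x : Fin n → ℂ) (r ρ : ℝ) (hr : 0 < r) (hρ : 0 < ρ)
    (Y : (Fin n → ℂ) →L[ℂ] (Fin n → ℂ))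
    (hK : KrawczykCond F x r Y ρ) :
    (∀ y₁ ∈ Metric.closedBall x r, ∀ y₂ ∈ Metric.closedBall x r,
      ‖(y₁ - Y (F y₁)) - (y₂ - Y (F y₂))‖ ≤ ρ * ‖y₁ - y₂‖) ∧
    (∀ y ∈ Metric.closedBall x r, (y - Y (F y)) ∈ Metric.closedBall x (r * ρ)) :=
  krawczyk_quasiNewton_lipschitz_and_maps_general F hF x r ρ hr Y hK
end

section
/- Let G, H : ℂⁿ → ℂⁿ be continuously differentiable and, for t ∈ ℝ, set F_t(x) = G(x) + (t − t₀)·H(x), so that F_{t₀} = G. Let x ∈ ℂⁿ, r > 0, 0 < ρ < τ, and let Y : ℂⁿ → ℂⁿ be a continuous linear map. Assume: (i) the pointwise Krawczyk condition holds for (G, x, r, Y, ρ); (ii) M ≥ 0 satisfies ‖Y ∘ DH(z)‖ ≤ M (operator norm) for every z in the closed ball of radius r centered at x; (iii) ‖Y(H(x))‖ + r·M > 0; and (iv) 0 ≤ dt ≤ (τ − ρ)·r / (‖Y(H(x))‖ + r·M). Then for every t ∈ [t₀, t₀ + dt], the pointwise Krawczyk condition holds for (F_t, x, r, Y, τ);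 that is, for every z in the closed ball of radius r around x and every v with ‖v‖ ≤ r, ‖−Y(F_t(x)) + v − Y(DF_t(z)(v))‖ ≤ r·τ. -/
section

variable {E : Type*} [NormedAddCommGroup E] [NormedSpace ℂ E]

theorem fderiv_add_real_smul {G H : E → E} {z : E} (hG : DifferentiableAt ℂ G z)
    (hH : DifferentiableAt ℂ H z) (s : ℝ) :
    fderiv ℂ (fun w => G w + s • H w) z = fderiv ℂ G z + s • fderiv ℂ H z := by
  rw [fderiv_fun_add (g := fun w => s • H w) hG (hH.const_smul s), fderiv_fun_const_smul hH s]

theorem krawczyk_add_real_smul_eq (Y DG DH : E →L[ℂ] E) (Gx Hx v : E) (s : ℝ) :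
    -Y (Gx + s • Hx) + v - Y ((DG + s • DH) v)
      = (-Y Gx + v - Y (DG v)) - s • (Y Hx + Y.comp DH v) := by
  simp only [_root_.add_apply, _root_.smul_apply,
    ContinuousLinearMap.comp_apply, map_add, ContinuousLinearMap.map_smul_of_tower, smul_add]
  abel

theorem norm_krawczyk_add_real_smul_le {G H : E → E} {Y : E →L[ℂ] E} {x z v : E} {r M s : ℝ}
    (hG : DifferentiableAt ℂ G z) (hH : DifferentiableAt ℂ H z) (hs : 0 ≤ s) (hv : ‖v‖ ≤ r)
    (hM : ‖Y.comp (fderiv ℂ H z)‖ ≤ M) :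
    ‖-Y (G x + s • H x) + v - Y (fderiv ℂ (fun w => G w + s • H w) z v)‖
      ≤ ‖-Y (G x) + v - Y (fderiv ℂ G z v)‖ + s * (‖Y (H x)‖ + r * M) := by
  rw [fderiv_add_real_smul hG hH, krawczyk_add_real_smul_eq]
  have hDH : ‖Y.comp (fderiv ℂ H z) v‖ ≤ r * M := by
    rw [mul_comm]
    exact ContinuousLinearMap.le_of_opNorm_le_of_le _ hM hv
  calc _ ≤ ‖-Y (G x) + v - Y (fderiv ℂ G z v)‖ + ‖s • (Y (H x) + Y.comp (fderiv ℂ H z) v)‖ :=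
        norm_sub_le _ _
    _ ≤ _ := by
        rw [norm_smul, Real.norm_of_nonneg hs]
        gcongr
        exact (norm_add_le _ _).trans (by gcongr)

end

theorem KrawczykCond.add_real_smul {n : ℕ} {G H : (Fin n → ℂ) → (Fin n → ℂ)} {x : Fin n → ℂ}
    {r ρ τ M s : ℝ} {Y : (Fin n → ℂ) →L[ℂ] (Fin n → ℂ)} (hG : Differentiable ℂ G)
    (hH : Differentiable ℂ H) (hK : KrawczykCond G x r Y ρ)
    (hM : ∀ z ∈ Metric.closedBall x r, ‖Y.comp (fderiv ℂ H z)‖ ≤ M) (hs : 0 ≤ s)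
    (hτ : r * ρ + s * (‖Y (H x)‖ + r * M) ≤ r * τ) :
    KrawczykCond (fun w => G w + s • H w) x r Y τ := fun z hz v hv =>
  (norm_krawczyk_add_real_smul_le (hG z) (hH z) hs hv (hM z hz)).trans
    ((add_le_add_left (hK z hz v hv) _).trans hτ)

theorem apriori_stepsize_bound_general {n : ℕ}
    (G H : (Fin n → ℂ) → (Fin n → ℂ)) (hG : ContDiff ℂ 1 G) (hH : ContDiff ℂ 1 H)
    (t₀ : ℝ) (x : Fin n → ℂ) (r ρ τ : ℝ)
    (Y : (Fin n → ℂ) →L[ℂ] (Fin n → ℂ))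
    (hK : KrawczykCond G x r Y ρ)
    (M : ℝ)
    (hM : ∀ z ∈ Metric.closedBall x r, ‖Y.comp (fderiv ℂ H z)‖ ≤ M)
    (hpos : 0 < ‖Y (H x)‖ + r * M)
    (dt : ℝ)
    (hdt : dt ≤ (τ - ρ) * r / (‖Y (H x)‖ + r * M)) :
    ∀ t ∈ Set.Icc t₀ (t₀ + dt),
      KrawczykCond (fun w => G w + (t - t₀) • H w) x r Y τ := by
  rintro t ⟨ht₀, ht⟩
  have hstep : (t - t₀) * (‖Y (H x)‖ + r * M) ≤ (τ - ρ) * r := by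
    rw [← le_div_iff₀ hpos]
    linarith
  refine hK.add_real_smul (hG.differentiable one_ne_zero) (hH.differentiable one_ne_zero) hM
    (sub_nonneg.mpr ht₀) ?_
  linarith

/-- A priori stepsize bound (Theorem 3.1): if the Krawczyk condition holds for
`(G, x, r, Y, ρ)` with the affine linear homotopy `F_t = G + (t - t₀) • H`, and the
stepsize satisfies `dt ≤ (τ - ρ) r / (‖Y (H x)‖ + r M)` where `M` bounds the operator
norms `‖Y ∘ DH(z)‖` over the certified ball, then the Krawczyk condition holds for
`(F_t, x, r, Y, τ)` for every `t ∈ [t₀, t₀ + dt]`. -/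
theorem apriori_stepsize_bound {n : ℕ}
    (G H : (Fin n → ℂ) → (Fin n → ℂ)) (hG : ContDiff ℂ 1 G) (hH : ContDiff ℂ 1 H)
    (t₀ : ℝ) (x : Fin n → ℂ) (r ρ τ : ℝ) (hr : 0 < r) (hρ : 0 < ρ) (hρτ : ρ < τ)
    (Y : (Fin n → ℂ) →L[ℂ] (Fin n → ℂ))
    (hK : KrawczykCond G x r Y ρ)
    (M : ℝ) (hM0 : 0 ≤ M)
    (hM : ∀ z ∈ Metric.closedBall x r, ‖Y.comp (fderiv ℂ H z)‖ ≤ M)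
    (hpos : 0 < ‖Y (H x)‖ + r * M)
    (dt : ℝ) (hdt0 : 0 ≤ dt)
    (hdt : dt ≤ (τ - ρ) * r / (‖Y (H x)‖ + r * M)) :
    ∀ t ∈ Set.Icc t₀ (t₀ + dt),
      KrawczykCond (fun w => G w + (t - t₀) • H w) x r Y τ :=
  apriori_stepsize_bound_general G H hG hH t₀ x r ρ τ Y hK M hM hpos dt hdt
end

section
/- Let F : ℂⁿ → ℂⁿ admit a power series expansion centered at y ∈ ℂⁿ converging on a ball of radius at least r > 0 (i.e., F equals its Taylor series at y on that ball). Suppose the Fréchet derivative DF(y) is invertible, and set Y = DF(y)⁻¹. Let γ ≥ 0 satisfy ‖Y ∘ DᵏF(y)‖ ≤ k! · γ^(k−1) for every k ≥ 2, where DᵏF(y) is the k-th derivative (a continuous multilinear map) and the norm is the multilinear operator norm. Assume u := γ·r < 1. Then for every z with ‖z − y‖ < r, the operator norm of Y ∘ (DF(y) − DF(z)) is at most 1/(1−u)² − 1; equivalently, ‖Id − Y ∘ DF(z)‖ ≤ 1/(1−u)² − 1. -/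
/-!
Composing with `Y` reduces the estimate to the case `DF(y) = id`. Then `DF` is analytic on the
ball with series `p.derivSeries`, whose `k`-th term at `z - y` equals
`D^(k+1)F(y)(z - y, …, z - y) / k!`; the `γ`-bound makes its norm at most `(k + 1) u^k`, and
summing over `k ≥ 1` gives `∑ (k + 1) u^k - 1 = 1/(1 - u)² - 1`.
-/

open scoped Nat

theorem hasSum_add_two_mul_pow_succ {𝕜 : Type*} [NormedDivisionRing 𝕜] {u : 𝕜} (hu : ‖u‖ < 1) :
    HasSum (fun k : ℕ ↦ ((k : 𝕜) + 2) * u ^ (k + 1)) (1 / (1 - u) ^ 2 - 1) := by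
  have h := hasSum_choose_mul_geometric_of_norm_lt_one 1 hu
  rw [← hasSum_nat_add_iff' 1] at h
  simpa [add_assoc, one_add_one_eq_two] using h

namespace HasFPowerSeriesOnBall

variable {𝕜 E F : Type*} [RCLike 𝕜] [NormedAddCommGroup E] [NormedSpace 𝕜 E]
  [NormedAddCommGroup F] [NormedSpace 𝕜 F] [CompleteSpace F]
  {f : E → F} {p : FormalMultilinearSeries 𝕜 E F} {x : E}

theorem hasSum_fderiv_sub {r : ENNReal} (hf : HasFPowerSeriesOnBall f p x r) {y : E}
    (hy : y ∈ Metric.eball 0 r) :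
    HasSum (fun k ↦ p.derivSeries (k + 1) fun _ ↦ y) (fderiv 𝕜 f (x + y) - fderiv 𝕜 f x) := by
  have h := hf.fderiv.hasSum hy
  rw [← hasSum_nat_add_iff' 1] at h
  simpa [hf.fderiv.coeff_zero] using h

theorem factorial_mul_norm_derivSeries_le {r : ENNReal} (hf : HasFPowerSeriesOnBall f p x r)
    (k : ℕ) (y : E) :
    k ! * ‖p.derivSeries k fun _ ↦ y‖ ≤ ‖iteratedFDeriv 𝕜 (k + 1) f x‖ * ‖y‖ ^ k := by
  rw [← norm_iteratedFDeriv_fderiv, ← RCLike.norm_natCast (K := 𝕜), ← norm_smul,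
    Nat.cast_smul_eq_nsmul, hf.fderiv.factorial_smul]
  simpa using (iteratedFDeriv 𝕜 k (fderiv 𝕜 f) x).le_opNorm fun _ ↦ y

theorem norm_derivSeries_succ_le {r : ENNReal} (hf : HasFPowerSeriesOnBall f p x r) {γ : ℝ}
    (hγ : ∀ k : ℕ, 2 ≤ k → ‖iteratedFDeriv 𝕜 k f x‖ ≤ k ! * γ ^ (k - 1)) (k : ℕ) (y : E) :
    ‖p.derivSeries (k + 1) fun _ ↦ y‖ ≤ (k + 2) * (γ * ‖y‖) ^ (k + 1) := by
  have hfac : ((k + 2)! : ℝ) = (k + 1)! * (k + 2) := by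
    rw [Nat.factorial_succ (k + 1)]
    push_cast
    ring
  have h : ((k + 1)! : ℝ) * ‖p.derivSeries (k + 1) fun _ ↦ y‖
      ≤ (k + 1)! * ((k + 2) * (γ * ‖y‖) ^ (k + 1)) :=
    calc _ ≤ ‖iteratedFDeriv 𝕜 (k + 2) f x‖ * ‖y‖ ^ (k + 1) :=
          hf.factorial_mul_norm_derivSeries_le (k + 1) y
      _ ≤ (k + 2)! * γ ^ (k + 1) * ‖y‖ ^ (k + 1) := by
          gcongr
          exact hγ (k + 2) (by omega)
      _ = _ := by rw [hfac]; ring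
  exact le_of_mul_le_mul_left h (by positivity)

theorem norm_fderiv_sub_le {r : ℝ} (hf : HasFPowerSeriesOnBall f p x (ENNReal.ofReal r))
    {γ : ℝ} (hγ0 : 0 ≤ γ)
    (hγ : ∀ k : ℕ, 2 ≤ k → ‖iteratedFDeriv 𝕜 k f x‖ ≤ k ! * γ ^ (k - 1))
    (hu : γ * r < 1) {z : E} (hz : ‖z - x‖ < r) :
    ‖fderiv 𝕜 f x - fderiv 𝕜 f z‖ ≤ 1 / (1 - γ * r) ^ 2 - 1 := by
  have hzx : z - x ∈ Metric.eball 0 (ENNReal.ofReal r) := by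
    rwa [Metric.mem_eball, edist_lt_ofReal, dist_zero_right]
  have hu' : ‖γ * r‖ < 1 := by
    rwa [Real.norm_of_nonneg (mul_nonneg hγ0 ((norm_nonneg _).trans hz.le))]
  have hsum := hf.hasSum_fderiv_sub hzx
  rw [add_sub_cancel] at hsum
  rw [norm_sub_rev]
  refine hsum.norm_le_of_bounded (hasSum_add_two_mul_pow_succ hu') fun k ↦ ?_
  calc _ ≤ (k + 2) * (γ * ‖z - x‖) ^ (k + 1) := hf.norm_derivSeries_succ_le hγ k _
    _ ≤ (k + 2) * (γ * r) ^ (k + 1) := by gcongr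

end HasFPowerSeriesOnBall

theorem jacobian_variation_bound_general {n : ℕ}
    (F : (Fin n → ℂ) → (Fin n → ℂ)) (y : Fin n → ℂ) (r : ℝ)
    (p : FormalMultilinearSeries ℂ (Fin n → ℂ) (Fin n → ℂ))
    (hp : HasFPowerSeriesOnBall F p y (ENNReal.ofReal r))
    (Y : (Fin n → ℂ) ≃L[ℂ] (Fin n → ℂ))
    (hY : (Y.symm : (Fin n → ℂ) →L[ℂ] (Fin n → ℂ)) = fderiv ℂ F y)
    (γ : ℝ) (hγ0 : 0 ≤ γ)
    (hγ : ∀ k : ℕ, 2 ≤ k →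
      ‖(Y : (Fin n → ℂ) →L[ℂ] (Fin n → ℂ)).compContinuousMultilinearMap
          (iteratedFDeriv ℂ k F y)‖ ≤ (k.factorial : ℝ) * γ ^ (k - 1))
    (hu : γ * r < 1) :
    ∀ z : Fin n → ℂ, ‖z - y‖ < r →
      ‖(Y : (Fin n → ℂ) →L[ℂ] (Fin n → ℂ)).comp (fderiv ℂ F y - fderiv ℂ F z)‖
          ≤ 1 / (1 - γ * r) ^ 2 - 1 ∧
      ‖ContinuousLinearMap.id ℂ (Fin n → ℂ)
          - (Y : (Fin n → ℂ) →L[ℂ] (Fin n → ℂ)).comp (fderiv ℂ F z)‖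
          ≤ 1 / (1 - γ * r) ^ 2 - 1 := by
  intro z hz
  have hYF : HasFPowerSeriesOnBall (Y ∘ F) _ y (ENNReal.ofReal r) :=
    (Y : (Fin n → ℂ) →L[ℂ] (Fin n → ℂ)).comp_hasFPowerSeriesOnBall hp
  have hvar := hYF.norm_fderiv_sub_le hγ0
    (fun k hk ↦ by rw [Y.iteratedFDeriv_comp_left]; exact hγ k hk) hu hz
  rw [Y.comp_fderiv, Y.comp_fderiv, ← ContinuousLinearMap.comp_sub] at hvar
  refine ⟨hvar, ?_⟩
  rwa [ContinuousLinearMap.comp_sub, ← hY, ContinuousLinearEquiv.coe_comp_coe_symm] at hvar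

/-- Key analytic estimate in the proof of Proposition 4.3: if `F` equals its Taylor
series at `y` on a ball of radius at least `r`, `Y = DF(y)⁻¹`, and
`‖Y ∘ DᵏF(y)‖ ≤ k! γ^(k-1)` for all `k ≥ 2` with `u = γ r < 1`, then for every `z`
with `‖z - y‖ < r` one has `‖Y ∘ (DF(y) - DF(z))‖ ≤ 1/(1-u)² - 1`, equivalently
`‖Id - Y ∘ DF(z)‖ ≤ 1/(1-u)² - 1`. -/
theorem jacobian_variation_bound {n : ℕ}
    (F : (Fin n → ℂ) → (Fin n → ℂ)) (y : Fin n → ℂ) (r : ℝ) (hr : 0 < r)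
    (p : FormalMultilinearSeries ℂ (Fin n → ℂ) (Fin n → ℂ))
    (hp : HasFPowerSeriesOnBall F p y (ENNReal.ofReal r))
    (Y : (Fin n → ℂ) ≃L[ℂ] (Fin n → ℂ))
    (hY : (Y.symm : (Fin n → ℂ) →L[ℂ] (Fin n → ℂ)) = fderiv ℂ F y)
    (γ : ℝ) (hγ0 : 0 ≤ γ)
    (hγ : ∀ k : ℕ, 2 ≤ k →
      ‖(Y : (Fin n → ℂ) →L[ℂ] (Fin n → ℂ)).compContinuousMultilinearMap
          (iteratedFDeriv ℂ k F y)‖ ≤ (k.factorial : ℝ) * γ ^ (k - 1))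
    (hu : γ * r < 1) :
    ∀ z : Fin n → ℂ, ‖z - y‖ < r →
      ‖(Y : (Fin n → ℂ) →L[ℂ] (Fin n → ℂ)).comp (fderiv ℂ F y - fderiv ℂ F z)‖
          ≤ 1 / (1 - γ * r) ^ 2 - 1 ∧
      ‖ContinuousLinearMap.id ℂ (Fin n → ℂ)
          - (Y : (Fin n → ℂ) →L[ℂ] (Fin n → ℂ)).comp (fderiv ℂ F z)‖
          ≤ 1 / (1 - γ * r) ^ 2 - 1 :=
  jacobian_variation_bound_general F y r p hp Y hY γ hγ0 hγ hu
end

section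
/- Let G, H : ℂⁿ → ℂⁿ be continuously differentiable and, for t ∈ ℝ, set F_t(x) = G(x) + (t − t₀)·H(x). Let x ∈ ℂⁿ, r > 0, 0 < ρ < τ < 1, and let Y : ℂⁿ → ℂⁿ be an invertible continuous linear map. Assume: (i) the pointwise Krawczyk condition holds for (G, x, r, Y, ρ); (ii) M ≥ 0 satisfies ‖Y ∘ DH(z)‖ ≤ M for every z in the closed ball of radius r centered at x; (iii) ‖Y(H(x))‖ + r·M > 0; and (iv) 0 ≤ dt ≤ (τ − ρ)·r / (‖Y(H(x))‖ + r·M). Then for every t ∈ [t₀, t₀ + dt], the system F_t has a unique zero in the closed ball of radius r centered at x. -/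
open Metric Set Function

theorem norm_le_of_norm_add_le_of_norm_sub_le {E : Type*} [NormedAddCommGroup E]
    [NormedSpace ℝ E] {a w : E} {c : ℝ} (hadd : ‖a + w‖ ≤ c) (hsub : ‖a - w‖ ≤ c) :
    ‖w‖ ≤ c := by
  have htwo : (2 : ℝ) • w = (a + w) - (a - w) := by rw [two_smul]; abel
  have := norm_sub_le (a + w) (a - w)
  rw [← htwo, norm_smul, Real.norm_two] at this
  linarith

theorem ContinuousLinearMap.opNorm_le_of_closedBall {𝕜 E F : Type*} [RCLike 𝕜]
    [NormedAddCommGroup E] [NormedSpace 𝕜 E] [NormedAddCommGroup F] [NormedSpace 𝕜 F]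
    (f : E →L[𝕜] F) {r C : ℝ} (hr : 0 < r) (hf : ∀ v, ‖v‖ ≤ r → ‖f v‖ ≤ r * C) :
    ‖f‖ ≤ C := by
  have hC : 0 ≤ C :=
    nonneg_of_mul_nonneg_right ((norm_nonneg _).trans (hf 0 (by simpa using hr.le))) hr
  refine f.opNorm_le_of_unit_norm hC fun v hv => ?_
  have := hf ((r : 𝕜) • v) (by simp [norm_smul, hv, abs_of_pos hr])
  rw [map_smul, norm_smul, RCLike.norm_ofReal, abs_of_pos hr] at this
  exact le_of_mul_le_mul_left this hr

theorem Convex.norm_add_image_sub_le_of_norm_add_hasFDerivWithin_le {E G : Type*}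
    [NormedAddCommGroup E] [NormedSpace ℝ E] [NormedAddCommGroup G] [NormedSpace ℝ G]
    {f : E → G} {f' : E → E →L[ℝ] G} {s : Set E} {x y : E} {c : G} {C : ℝ}
    (hf : ∀ z ∈ s, HasFDerivWithinAt f (f' z) s z) (bound : ∀ z ∈ s, ‖c + f' z (y - x)‖ ≤ C)
    (hs : Convex ℝ s) (xs : x ∈ s) (ys : y ∈ s) : ‖c + (f y - f x)‖ ≤ C := by
  set g := (AffineMap.lineMap x y : ℝ → E)
  have segm : MapsTo g (Icc 0 1) s := hs.mapsTo_lineMap xs ys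
  have hD : ∀ t ∈ Icc (0 : ℝ) 1,
      HasDerivWithinAt (fun t => t • c + f (g t)) (c + f' (g t) (y - x)) (Icc 0 1) t :=
    fun t ht => by
      convert! ((hasDerivWithinAt_id t _).smul_const c).add
        ((hf (g t) (segm ht)).comp_hasDerivWithinAt t AffineMap.hasDerivWithinAt_lineMap segm)
        using 1
      rw [one_smul]
  simpa [g, add_sub_assoc] using norm_image_sub_le_of_norm_deriv_le_segment_01' hD
    fun t ht => bound _ (segm (Ico_subset_Icc_self ht))

theorem LipschitzOnWith.existsUnique_isFixedPt {α : Type*} [MetricSpace α] {f : α → α}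
    {s : Set α} {K : NNReal} (hf : LipschitzOnWith K f s) (hK : K < 1) (hsf : MapsTo f s s)
    (hsc : IsComplete s) (hne : s.Nonempty) : ∃! y, y ∈ s ∧ IsFixedPt f y := by
  have hcontr : ContractingWith K (hsf.restrict f s s) := ⟨hK, hf.mapsToRestrict hsf⟩
  obtain ⟨x₀, hx₀⟩ := hne
  obtain ⟨y, hys, hy, -⟩ := hcontr.exists_fixedPoint' hsc hsf hx₀ (edist_ne_top _ _)
  refine ⟨y, ⟨hys, hy⟩, fun z ⟨hzs, hz⟩ => ?_⟩
  have := hcontr.fixedPoint_unique' (x := ⟨z, hzs⟩) (y := ⟨y, hys⟩)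
    (Subtype.ext hz) (Subtype.ext hy)
  exact congrArg Subtype.val this

theorem hasFDerivAt_sub_clm_apply {𝕜 E : Type*} [NontriviallyNormedField 𝕜]
    [NormedAddCommGroup E] [NormedSpace 𝕜 E] {F : E → E} (Y : E →L[𝕜] E) {z : E}
    (hF : DifferentiableAt 𝕜 F z) :
    HasFDerivAt (fun z => z - Y (F z)) (ContinuousLinearMap.id 𝕜 E - Y.comp (fderiv 𝕜 F z)) z :=
  (hasFDerivAt_id z).sub (Y.hasFDerivAt.comp z hF.hasFDerivAt)

namespace KrawczykCond

variable {n : ℕ} {F G H : (Fin n → ℂ) → (Fin n → ℂ)} {x : Fin n → ℂ} {r ρ : ℝ}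
  {Y : (Fin n → ℂ) →L[ℂ] (Fin n → ℂ)}

theorem add_smul (hK : KrawczykCond G x r Y ρ)
    (hG : Differentiable ℂ G) (hH : Differentiable ℂ H) {M : ℝ}
    (hM : ∀ z ∈ closedBall x r, ‖Y.comp (fderiv ℂ H z)‖ ≤ M) {s τ : ℝ}
    (hs : r * ρ + |s| * (‖Y (H x)‖ + r * M) ≤ r * τ) :
    KrawczykCond (fun z => G z + s • H z) x r Y τ := by
  intro z hz v hv
  have hDF : fderiv ℂ (fun z => G z + s • H z) z = fderiv ℂ G z + s • fderiv ℂ H z :=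
    ((hG z).hasFDerivAt.add ((hH z).hasFDerivAt.const_smul s)).fderiv
  have hDH : ‖Y.comp (fderiv ℂ H z) v‖ ≤ r * M :=
    calc ‖Y.comp (fderiv ℂ H z) v‖ ≤ ‖Y.comp (fderiv ℂ H z)‖ * r :=
          (Y.comp _).le_of_opNorm_le_of_le le_rfl hv
      _ ≤ r * M := by
          rw [mul_comm]; exact mul_le_mul_of_nonneg_left (hM z hz) (dist_nonneg.trans hz)
  calc ‖-Y (G x + s • H x) + v - Y (fderiv ℂ (fun z => G z + s • H z) z v)‖
      = ‖(-Y (G x) + v - Y (fderiv ℂ G z v)) - s • (Y (H x) + Y.comp (fderiv ℂ H z) v)‖ := by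
        rw [hDF]
        simp only [add_apply, smul_apply, ContinuousLinearMap.comp_apply, map_add,
          ContinuousLinearMap.map_smul_of_tower, smul_add]
        congr 1
        abel
    _ ≤ r * ρ + |s| * (‖Y (H x)‖ + r * M) := by
        refine norm_sub_le_of_le (hK z hz v hv) ?_
        rw [norm_smul, Real.norm_eq_abs]
        exact mul_le_mul_of_nonneg_left (norm_add_le_of_le le_rfl hDH) (abs_nonneg s)
    _ ≤ r * τ := hs

theorem opNorm_id_sub_comp_fderiv_le (hK : KrawczykCond F x r Y ρ) (hr : 0 < r)
    {z : Fin n → ℂ} (hz : z ∈ closedBall x r) :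
    ‖ContinuousLinearMap.id ℂ _ - Y.comp (fderiv ℂ F z)‖ ≤ ρ := by
  refine ContinuousLinearMap.opNorm_le_of_closedBall _ hr fun v hv => ?_
  refine norm_le_of_norm_add_le_of_norm_sub_le (a := -Y (F x)) ?_ ?_
  · simpa [add_sub_assoc] using hK z hz v hv
  · have := hK z hz (-v) (by rwa [norm_neg])
    rwa [map_neg, map_neg, add_sub_assoc, ← neg_sub', ← sub_eq_add_neg] at this

theorem lipschitzOnWith (hK : KrawczykCond F x r Y ρ) (hF : Differentiable ℂ F) (hr : 0 < r) :
    LipschitzOnWith ρ.toNNReal (fun z => z - Y (F z)) (closedBall x r) := by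
  refine (convex_closedBall x r).lipschitzOnWith_of_nnnorm_hasFDerivWithin_le
    (fun z _ => (hasFDerivAt_sub_clm_apply Y (hF z)).hasFDerivWithinAt) fun z hz => ?_
  have hρ := hK.opNorm_id_sub_comp_fderiv_le hr hz
  rwa [Real.le_toNNReal_iff_coe_le ((norm_nonneg _).trans hρ), coe_nnnorm]

theorem mapsTo (hK : KrawczykCond F x r Y ρ) (hF : Differentiable ℂ F) (hρ : ρ ≤ 1) :
    MapsTo (fun z => z - Y (F z)) (closedBall x r) (closedBall x r) := by
  intro z hz
  have hr : 0 ≤ r := dist_nonneg.trans hz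
  have hx : x ∈ closedBall x r := mem_closedBall_self hr
  have hmvt := (convex_closedBall x r).norm_add_image_sub_le_of_norm_add_hasFDerivWithin_le
    (c := -Y (F x)) (C := r * ρ)
    (fun ζ _ => ((hasFDerivAt_sub_clm_apply Y (hF ζ)).restrictScalars ℝ).hasFDerivWithinAt)
    (fun ζ hζ => by simpa [add_sub_assoc] using hK ζ hζ (z - x) (mem_closedBall_iff_norm.1 hz))
    hx hz
  rw [mem_closedBall_iff_norm]
  calc ‖z - Y (F z) - x‖ = ‖-Y (F x) + (z - Y (F z) - (x - Y (F x)))‖ := by congr 1; abel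
    _ ≤ r * ρ := hmvt
    _ ≤ r := mul_le_of_le_one_right hr hρ

theorem existsUnique_zero {Y : (Fin n → ℂ) ≃L[ℂ] (Fin n → ℂ)}
    (hK : KrawczykCond F x r (Y : (Fin n → ℂ) →L[ℂ] (Fin n → ℂ)) ρ) (hF : Differentiable ℂ F)
    (hr : 0 < r) (hρ : ρ < 1) :
    ∃! xs, xs ∈ closedBall x r ∧ F xs = 0 := by
  have hfix : ∀ z, IsFixedPt (fun z => z - (Y : (Fin n → ℂ) →L[ℂ] (Fin n → ℂ)) (F z)) z ↔
      F z = 0 := fun z => by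
    simp [IsFixedPt]
  simpa only [hfix] using (hK.lipschitzOnWith hF hr).existsUnique_isFixedPt
    (Real.toNNReal_lt_one.2 hρ) (hK.mapsTo hF hρ.le) isClosed_closedBall.isComplete
    (nonempty_closedBall.2 hr.le)

end KrawczykCond

theorem apriori_stepsize_certified_enclosure_general {n : ℕ}
    (G H : (Fin n → ℂ) → (Fin n → ℂ)) (hG : ContDiff ℂ 1 G) (hH : ContDiff ℂ 1 H)
    (t₀ : ℝ) (x : Fin n → ℂ) (r ρ τ : ℝ) (hr : 0 < r)
    (hτ : τ < 1)
    (Y : (Fin n → ℂ) ≃L[ℂ] (Fin n → ℂ))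
    (hK : KrawczykCond G x r (Y : (Fin n → ℂ) →L[ℂ] (Fin n → ℂ)) ρ)
    (M : ℝ)
    (hM : ∀ z ∈ Metric.closedBall x r,
      ‖((Y : (Fin n → ℂ) →L[ℂ] (Fin n → ℂ))).comp (fderiv ℂ H z)‖ ≤ M)
    (hpos : 0 < ‖Y (H x)‖ + r * M)
    (dt : ℝ)
    (hdt : dt ≤ (τ - ρ) * r / (‖Y (H x)‖ + r * M)) :
    ∀ t ∈ Set.Icc t₀ (t₀ + dt),
      ∃! xs : Fin n → ℂ, xs ∈ Metric.closedBall x r ∧ G xs + (t - t₀) • H xs = 0 := by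
  intro t ht
  have hGd : Differentiable ℂ G := hG.differentiable one_ne_zero
  have hHd : Differentiable ℂ H := hH.differentiable one_ne_zero
  have hstep : r * ρ + |t - t₀| * (‖Y (H x)‖ + r * M) ≤ r * τ := by
    have hdtP := (le_div_iff₀ hpos).1 hdt
    rw [abs_of_nonneg (sub_nonneg.2 ht.1)]
    nlinarith [ht.2]
  exact (hK.add_smul hGd hHd hM hstep).existsUnique_zero
    (fun z => (hGd z).add ((hHd z).const_smul (t - t₀))) hr hτ

/-- Theorem 3.1 combined with the Krawczyk certification theorem: the a priori stepsize
bound guarantees that for every `t ∈ [t₀, t₀ + dt]` the system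
`F_t = G + (t - t₀) • H` has a unique zero in the closed ball of radius `r` around `x`. -/
theorem apriori_stepsize_certified_enclosure {n : ℕ}
    (G H : (Fin n → ℂ) → (Fin n → ℂ)) (hG : ContDiff ℂ 1 G) (hH : ContDiff ℂ 1 H)
    (t₀ : ℝ) (x : Fin n → ℂ) (r ρ τ : ℝ) (hr : 0 < r)
    (hρ : 0 < ρ) (hρτ : ρ < τ) (hτ : τ < 1)
    (Y : (Fin n → ℂ) ≃L[ℂ] (Fin n → ℂ))
    (hK : KrawczykCond G x r (Y : (Fin n → ℂ) →L[ℂ] (Fin n → ℂ)) ρ)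
    (M : ℝ) (hM0 : 0 ≤ M)
    (hM : ∀ z ∈ Metric.closedBall x r,
      ‖((Y : (Fin n → ℂ) →L[ℂ] (Fin n → ℂ))).comp (fderiv ℂ H z)‖ ≤ M)
    (hpos : 0 < ‖Y (H x)‖ + r * M)
    (dt : ℝ) (hdt0 : 0 ≤ dt)
    (hdt : dt ≤ (τ - ρ) * r / (‖Y (H x)‖ + r * M)) :
    ∀ t ∈ Set.Icc t₀ (t₀ + dt),
      ∃! xs : Fin n → ℂ, xs ∈ Metric.closedBall x r ∧ G xs + (t - t₀) • H xs = 0 :=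
  apriori_stepsize_certified_enclosure_general G H hG hH t₀ x r ρ τ hr hτ Y hK M hM hpos dt hdt
end
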